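/- arXiv:1110.1199 — 2 statements merged into one kernel-verified Lean document; each statement's English description precedes it below -/
import Mathlib

section
/- Let R be an integral domain that admits a group isomorphism φ: Frac(R)^×/R^× → ℤ^{(I)} such that g ≤ h (i.e., hg^{-1} ∈ R) if and only if φ(g) ≤ φ(h) componentwise. Then R is a unique factorization domain. -/
/-!
Composing `R ∖ {0} → Frac(R)ˣ → G(R)` with the isomorphism gives an additive map
`v : R ∖ {0} → ℤ^(I)` with `a ∣ b ↔ v a ≤ v b`. An element `pᵢ` with `v pᵢ = eᵢ` is prime, because
`eᵢ ≤ x + y` with `x, y ≥ 0` forces `eᵢ ≤ x` or `eᵢ ≤ y`; and a nonzero `a` is associated to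
`∏ᵢ pᵢ ^ (v a)ᵢ`, since the two have the same valuation and hence divide each other.
-/

open Finsupp

theorem Finsupp.single_le_iff_of_nonneg {ι α : Type*} [Preorder α] [Zero α] {f : ι →₀ α}
    (hf : 0 ≤ f) {i : ι} {x : α} : single i x ≤ f ↔ x ≤ f i := by
  classical
  refine ⟨fun h => by simpa using h i, fun h j => ?_⟩
  rcases eq_or_ne i j with rfl | hij
  · simpa using h
  · simpa [single_apply, hij] using hf j

theorem Finsupp.exists_multiset_sum_map_single_eq {ι : Type*} {c : ι →₀ ℤ} (hc : 0 ≤ c) :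
    ∃ s : Multiset ι, (s.map fun i => single i 1).sum = c := by
  suffices h : ∀ n : ι →₀ ℕ,
      ((toMultiset n).map fun i => single i (1 : ℤ)).sum = n.mapRange (↑) Nat.cast_zero by
    refine ⟨toMultiset (c.mapRange Int.toNat rfl), ?_⟩
    ext i
    simp [h, Int.toNat_of_nonneg (hc i)]
  intro n
  induction n using Finsupp.induction with
  | zero => simp
  | single_add i k n _ _ ih =>
    simp [toMultiset_add, ih, mapRange_add, Multiset.map_nsmul, Multiset.sum_nsmul, smul_single]

structure IsDivisibilityValuation {M ι : Type*} [MonoidWithZero M] (v : M → ι →₀ ℤ) : Prop where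
  map_mul : ∀ a b : M, a ≠ 0 → b ≠ 0 → v (a * b) = v a + v b
  dvd_iff_le : ∀ a b : M, a ≠ 0 → b ≠ 0 → (a ∣ b ↔ v a ≤ v b)

namespace IsDivisibilityValuation

variable {M ι : Type*} [CommMonoidWithZero M] {v : M → ι →₀ ℤ}

theorem map_one [Nontrivial M] (hv : IsDivisibilityValuation v) : v 1 = 0 := by
  simpa using hv.map_mul 1 1 one_ne_zero one_ne_zero

theorem nonneg (hv : IsDivisibilityValuation v) {a : M} (ha : a ≠ 0) : 0 ≤ v a := by
  have : Nontrivial M := ⟨a, 0, ha⟩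
  simpa [hv.map_one] using (hv.dvd_iff_le 1 a one_ne_zero ha).mp (one_dvd a)

theorem map_multiset_prod [Nontrivial M] [NoZeroDivisors M] (hv : IsDivisibilityValuation v)
    {s : Multiset M} (hs : 0 ∉ s) : v s.prod = (s.map v).sum := by
  induction s using Multiset.induction_on with
  | empty => simp [hv.map_one]
  | cons a s ih =>
    rw [Multiset.mem_cons, not_or] at hs
    rw [Multiset.prod_cons, hv.map_mul _ _ (Ne.symm hs.1) (Multiset.prod_ne_zero hs.2),
      Multiset.map_cons, Multiset.sum_cons, ih hs.2]

theorem prime_of_eq_single [NoZeroDivisors M] (hv : IsDivisibilityValuation v) {p : M}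
    (hp : p ≠ 0) {i : ι} (hvp : v p = single i 1) : Prime p := by
  have : Nontrivial M := ⟨p, 0, hp⟩
  refine ⟨hp, fun hunit => ?_, fun a b hab => ?_⟩
  · have h := (hv.dvd_iff_le p 1 hp one_ne_zero).mp hunit.dvd
    rw [hvp, hv.map_one] at h
    simpa using h i
  rcases eq_or_ne a 0 with rfl | ha
  · exact .inl (dvd_zero p)
  rcases eq_or_ne b 0 with rfl | hb
  · exact .inr (dvd_zero p)
  have hva := hv.nonneg ha
  have hvb := hv.nonneg hb
  rw [hv.dvd_iff_le _ _ hp (mul_ne_zero ha hb), hv.map_mul a b ha hb, hvp,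
    single_le_iff_of_nonneg (add_nonneg hva hvb)] at hab
  rw [hv.dvd_iff_le _ _ hp ha, hv.dvd_iff_le _ _ hp hb, hvp, single_le_iff_of_nonneg hva,
    single_le_iff_of_nonneg hvb]
  have := hva i
  have := hvb i
  simp only [coe_add, Pi.add_apply] at hab
  omega

theorem uniqueFactorizationMonoid [IsCancelMulZero M] (hv : IsDivisibilityValuation v)
    (hsingle : ∀ i, ∃ p : M, p ≠ 0 ∧ v p = single i 1) : UniqueFactorizationMonoid M := by
  choose p hp0 hvp using hsingle
  refine .of_exists_prime_factors fun a ha => ?_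
  have : Nontrivial M := ⟨a, 0, ha⟩
  obtain ⟨s, hs⟩ := exists_multiset_sum_map_single_eq (hv.nonneg ha)
  have hs0 : 0 ∉ s.map p := by simpa [eq_comm] using fun i _ => hp0 i
  have hprod0 : (s.map p).prod ≠ 0 := Multiset.prod_ne_zero hs0
  have hv_prod : v (s.map p).prod = v a := by
    rw [hv.map_multiset_prod hs0, Multiset.map_map, Function.comp_def]
    simpa only [hvp] using hs
  refine ⟨s.map p, ?_, associated_of_dvd_dvd ?_ ?_⟩
  · simpa using fun i _ => hv.prime_of_eq_single (hp0 i) (hvp i)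
  · exact (hv.dvd_iff_le _ _ hprod0 ha).mpr hv_prod.le
  · exact (hv.dvd_iff_le _ _ ha hprod0).mpr hv_prod.ge

end IsDivisibilityValuation

section FractionField

variable {R K : Type*} [CommRing R] [Field K] [Algebra R K] [IsFractionRing R K]

theorem IsFractionRing.dvd_iff_exists_algebraMap_eq_div {a : R} (b : R) (ha : a ≠ 0) :
    a ∣ b ↔ ∃ r : R, algebraMap R K r = algebraMap R K b / algebraMap R K a := by
  have ha' : algebraMap R K a ≠ 0 := IsFractionRing.to_map_eq_zero_iff.not.mpr ha
  constructor
  · rintro ⟨c, rfl⟩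
    exact ⟨c, by rw [map_mul, mul_div_cancel_left₀ _ ha']⟩
  · rintro ⟨r, hr⟩
    refine ⟨r, IsFractionRing.injective R K ?_⟩
    rw [map_mul, hr, mul_div_cancel₀ _ ha']

variable {ι : Type*}

open scoped Classical in
noncomputable def valuationOfUnitsHom (w : Kˣ →* Multiplicative (ι →₀ ℤ)) (a : R) : ι →₀ ℤ :=
  if ha : a = 0 then 0
  else (w (Units.mk0 (algebraMap R K a) (IsFractionRing.to_map_eq_zero_iff.not.mpr ha))).toAdd

theorem valuationOfUnitsHom_of_ne_zero (w : Kˣ →* Multiplicative (ι →₀ ℤ)) {a : R} (ha : a ≠ 0) :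
    valuationOfUnitsHom w a =
      (w (Units.mk0 (algebraMap R K a) (IsFractionRing.to_map_eq_zero_iff.not.mpr ha))).toAdd := by
  rw [valuationOfUnitsHom, dif_neg ha]

theorem exists_valuationOfUnitsHom_eq (w : Kˣ →* Multiplicative (ι →₀ ℤ))
    (hw : ∀ g h : Kˣ, (∃ r : R, algebraMap R K r = ((h * g⁻¹ : Kˣ) : K)) ↔ w g ≤ w h)
    (hsurj : Function.Surjective w) {c : ι →₀ ℤ} (hc : 0 ≤ c) :
    ∃ a : R, a ≠ 0 ∧ valuationOfUnitsHom w a = c := by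
  obtain ⟨g, hg⟩ := hsurj (.ofAdd c)
  obtain ⟨a, ha⟩ : ∃ a : R, algebraMap R K a = ((g * 1⁻¹ : Kˣ) : K) :=
    (hw 1 g).mpr (by rwa [map_one, hg, ← ofAdd_zero, Multiplicative.ofAdd_le])
  rw [inv_one, mul_one] at ha
  have ha0 : a ≠ 0 := by
    rintro rfl
    exact g.ne_zero (by rw [← ha, map_zero])
  refine ⟨a, ha0, ?_⟩
  rw [valuationOfUnitsHom_of_ne_zero w ha0, ← toAdd_ofAdd c, ← hg]
  congr 2
  exact Units.ext ha

variable [IsDomain R]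

theorem isDivisibilityValuation_valuationOfUnitsHom (w : Kˣ →* Multiplicative (ι →₀ ℤ))
    (hw : ∀ g h : Kˣ, (∃ r : R, algebraMap R K r = ((h * g⁻¹ : Kˣ) : K)) ↔ w g ≤ w h) :
    IsDivisibilityValuation (valuationOfUnitsHom (R := R) w) where
  map_mul a b ha hb := by
    rw [valuationOfUnitsHom_of_ne_zero w ha, valuationOfUnitsHom_of_ne_zero w hb,
      valuationOfUnitsHom_of_ne_zero w (mul_ne_zero ha hb), ← toAdd_mul, ← map_mul]
    congr 2
    exact Units.ext (map_mul _ a b)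
  dvd_iff_le a b ha hb := by
    rw [IsFractionRing.dvd_iff_exists_algebraMap_eq_div (K := K) b ha,
      valuationOfUnitsHom_of_ne_zero w ha, valuationOfUnitsHom_of_ne_zero w hb,
      Multiplicative.toAdd_le, ← hw]
    simp [div_eq_mul_inv]

theorem uniqueFactorizationMonoid_of_unitsHom (w : Kˣ →* Multiplicative (ι →₀ ℤ))
    (hw : ∀ g h : Kˣ, (∃ r : R, algebraMap R K r = ((h * g⁻¹ : Kˣ) : K)) ↔ w g ≤ w h)
    (hsurj : Function.Surjective w) : UniqueFactorizationMonoid R :=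
  (isDivisibilityValuation_valuationOfUnitsHom w hw).uniqueFactorizationMonoid fun _ =>
    exists_valuationOfUnitsHom_eq w hw hsurj (single_nonneg.mpr zero_le_one)

end FractionField

/-- If the divisibility group of an integral domain `R` is order-isomorphic to
`ℤ^{(I)}`, then `R` is a unique factorization domain. -/
theorem stmt_8 {R : Type u} [CommRing R] [IsDomain R] (I : Type v)
    (φ : (FractionRing R)ˣ ⧸
        (Units.map (algebraMap R (FractionRing R)).toMonoidHom).range ≃*
        Multiplicative (I →₀ ℤ))
    (hφ : ∀ g h : (FractionRing R)ˣ,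
      ((∃ r : R, algebraMap R (FractionRing R) r = ((h * g⁻¹ : _ˣ) : FractionRing R)) ↔
        Multiplicative.toAdd (φ (QuotientGroup.mk g)) ≤
          Multiplicative.toAdd (φ (QuotientGroup.mk h)))) :
    UniqueFactorizationMonoid R :=
  uniqueFactorizationMonoid_of_unitsHom (φ.toMonoidHom.comp (QuotientGroup.mk' _)) hφ
    (φ.surjective.comp QuotientGroup.mk_surjective)
end

section
/- Let K be a field with x_1,...,x_m algebraically independent, x_0 := 1, and define y_i := (x_{i+1} + x_{i-1})/x_i for 1 ≤ i ≤ m−1 together with y_0 := x_1. If U = K[y_0, y_1, ..., y_{m-1}] ⊆ K(x_1,...,x_m) then each x_k (1 ≤ k ≤ m) belongs to U. -/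
/-! Since `y_j x_j = x_{j+1} + x_{j-1}` and `x_j ≠ 0` by algebraic independence, the `x_k` satisfy
the three-term recurrence `x_{j+1} = y_j x_j - x_{j-1}` with `x₀ = 1` and `x₁ = y₀`, so induction
on `k` puts every `x_k` in `K[y₀, …, y_{m-1}]`. -/

theorem mem_of_three_term_recurrence {A S : Type*} [Ring A] [SetLike S A] [SubringClass S A]
    (s : S) (x c : ℕ → A) (n : ℕ) (h0 : x 0 ∈ s) (h1 : x 1 ∈ s)
    (hc : ∀ j, j + 2 ≤ n → c (j + 1) ∈ s)
    (hrec : ∀ j, j + 2 ≤ n → x (j + 2) = c (j + 1) * x (j + 1) - x j) :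
    ∀ k ≤ n, x k ∈ s := by
  intro k
  induction k using Nat.twoStepInduction with
  | zero => exact fun _ => h0
  | one => exact fun _ => h1
  | more j ih₀ ih₁ =>
    intro hj
    rw [hrec j hj]
    exact sub_mem (mul_mem (hc j hj) (ih₁ (by omega))) (ih₀ (by omega))

theorem stmt_11_general {K F : Type*} [Field K] [Field F] [Algebra K F]
    (m : ℕ) (x : ℕ → F) (hx0 : x 0 = 1)
    (hx : AlgebraicIndependent K (fun i : Fin m => x (i.val + 1)))
    (y : ℕ → F) (hy0 : y 0 = x 1)
    (hy : ∀ j, 1 ≤ j → j ≤ m - 1 → y j = (x (j + 1) + x (j - 1)) / x j) :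
    ∀ k, 1 ≤ k → k ≤ m →
      x k ∈ Algebra.adjoin K (Set.range (fun i : Fin m => y i.val)) := by
  have hy_mem : ∀ j < m, y j ∈ Algebra.adjoin K (Set.range (fun i : Fin m => y i.val)) :=
    fun j hj => Algebra.subset_adjoin ⟨⟨j, hj⟩, rfl⟩
  have hrec : ∀ j, j + 2 ≤ m → x (j + 2) = y (j + 1) * x (j + 1) - x j := by
    intro j hj
    have hne : x (j + 1) ≠ 0 := hx.ne_zero ⟨j, by omega⟩
    rw [hy (j + 1) (by omega) (by omega), Nat.add_sub_cancel, div_mul_cancel₀ _ hne]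
    ring
  refine fun k _ hk => mem_of_three_term_recurrence _ x y m ?_ ?_
    (fun j hj => hy_mem (j + 1) (by omega)) hrec k hk
  · exact hx0 ▸ one_mem _
  · exact hy0 ▸ hy_mem 0 (by omega)

/-- With `y₀ = x₁` and `y_j = (x_{j+1} + x_{j-1})/x_j` (`x₀ = 1`), every `x_k`
(`1 ≤ k ≤ m`) lies in the subalgebra `K[y₀, …, y_{m-1}]`. -/
theorem stmt_11 {K F : Type*} [Field K] [Field F] [Algebra K F]
    (m : ℕ) (hm : 2 ≤ m) (x : ℕ → F) (hx0 : x 0 = 1)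
    (hx : AlgebraicIndependent K (fun i : Fin m => x (i.val + 1)))
    (y : ℕ → F) (hy0 : y 0 = x 1)
    (hy : ∀ j, 1 ≤ j → j ≤ m - 1 → y j = (x (j + 1) + x (j - 1)) / x j) :
    ∀ k, 1 ≤ k → k ≤ m →
      x k ∈ Algebra.adjoin K (Set.range (fun i : Fin m => y i.val)) :=
  stmt_11_general m x hx0 hx y hy0 hy
end
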